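/- Let M be a binary matroid, T ⊆ E(M), and let C be a circuit of M containing an odd number of elements of T. Then C ∪ {a} is a circuit of the element splitting matroid M'_T, where a is the new element. -/

import Mathlib

open Set

variable {α : Type*}

/-- The rank of a set `X` in a matroid `M`: the maximum size of an independent subset of `X`. -/
noncomputable def mrank (M : Matroid α) (X : Set α) : ℕ :=
  sSup {n | ∃ I, M.Indep I ∧ I ⊆ X ∧ I.ncard = n}

/-- `(A, B)` is a `k`-separation of `M`: a partition of the ground set with both sides of
size at least `k` and `r(A) + r(B) - r(M) ≤ k - 1` (written additively). -/
def IsKSeparation (M : Matroid α) (k : ℕ) (A B : Set α) : Prop :=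
  A ∪ B = M.E ∧ Disjoint A B ∧ k ≤ A.ncard ∧ k ≤ B.ncard ∧
    mrank M A + mrank M B + 1 ≤ mrank M M.E + k

/-- `M` is `n`-connected if it has no `k`-separation for any `k < n`. -/
def NConnected (M : Matroid α) (n : ℕ) : Prop :=
  ∀ k A B, 1 ≤ k → k < n → ¬ IsKSeparation M k A B

/-- A circuit is a minimal dependent set. -/
def MCircuit (M : Matroid α) (C : Set α) : Prop := Minimal M.Dep C

/-- A cocircuit is a circuit of the dual matroid. -/
def MCocircuit (M : Matroid α) (C : Set α) : Prop := MCircuit M✶ C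

/-- A loop is a dependent singleton. -/
def MLoop (M : Matroid α) (e : α) : Prop := M.Dep {e}

/-- A coloop is a loop of the dual, i.e. an element lying in every base. -/
def MColoop (M : Matroid α) (e : α) : Prop := M✶.Dep {e}

/-- `M` is the vector matroid of the family of vectors `φ` over `GF(2)`:
a set is independent iff it lies in the ground set and the corresponding
vectors are linearly independent. -/
def IsRep {W : Type*} [AddCommGroup W] [Module (ZMod 2) W] (M : Matroid α) (φ : α → W) : Prop :=
  ∀ I : Set α, M.Indep I ↔ I ⊆ M.E ∧ LinearIndependent (ZMod 2) (I.restrict φ)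

open scoped Classical in
/-- The columns of the element splitting matrix `A'_T`: each original column gets an extra
coordinate (the new row), equal to `1` exactly on the columns labelled by `T`, and a new
column `a` which is `1` in the new row and `0` elsewhere. -/
noncomputable def splitRep {W : Type*} [AddCommGroup W] [Module (ZMod 2) W]
    (φ : α → W) (T : Set α) (a : α) : α → W × ZMod 2 :=
  fun x => if x = a then (0, 1) else (φ x, if x ∈ T then 1 else 0)

/-- `N` is the element splitting matroid `M'_T` of the binary matroid `M` (represented by `φ`)
with respect to `T`, with new element `a`. -/
def IsEleSplit {W : Type*} [AddCommGroup W] [Module (ZMod 2) W]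
    (M : Matroid α) (φ : α → W) (T : Set α) (a : α) (N : Matroid α) : Prop :=
  a ∉ M.E ∧ N.E = insert a M.E ∧ IsRep N (splitRep φ T a)

/-- `M` is the contraction `N / a` of the single element `a` from `N`. -/
def ContractElemEq (N : Matroid α) (a : α) (M : Matroid α) : Prop :=
  M.E = N.E \ {a} ∧ ∀ I : Set α,
    M.Indep I ↔ a ∉ I ∧
      ((N.Indep {a} ∧ N.Indep (insert a I)) ∨ (¬ N.Indep {a} ∧ N.Indep I))

/-!
Over `GF(2)` a set of columns is dependent exactly when some nonempty finite subset of it sums to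
zero, so the circuits of a binary matroid are its minimal nonempty zero-sum sets. In the split
representation every column `x ≠ a` becomes `(φ x, [x ∈ T])` and `a` becomes `(0, 1)`. A zero-sum
subset of `C ∪ {a}` therefore restricts to a zero-sum subset of `C`, which must be `C` itself;
the second coordinate then says that `a` is present iff `|C ∩ T|` is odd.
-/

theorem minimal_iff_of_forall_iff_exists_subset {P Q : Set α → Prop} {E C : Set α}
    (hPQ : ∀ D, P D ↔ D ⊆ E ∧ ∃ S ⊆ D, Q S) : Minimal P C ↔ C ⊆ E ∧ Minimal Q C := by
  constructor
  · rintro ⟨hPC, hCmin⟩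
    obtain ⟨hCE, S, hSC, hQS⟩ := (hPQ C).1 hPC
    obtain rfl : S = C :=
      hSC.antisymm (hCmin ((hPQ S).2 ⟨hSC.trans hCE, S, subset_rfl, hQS⟩) hSC)
    exact ⟨hCE, hQS, fun D hQD hDC => hCmin ((hPQ D).2 ⟨hDC.trans hCE, D, subset_rfl, hQD⟩) hDC⟩
  · rintro ⟨hCE, hQC, hCmin⟩
    refine ⟨(hPQ C).2 ⟨hCE, C, subset_rfl, hQC⟩, fun D hPD hDC => ?_⟩
    obtain ⟨-, S, hSD, hQS⟩ := (hPQ D).1 hPD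
    exact (hCmin hQS (hSD.trans hDC)).trans hSD

def IsNonemptyZeroSum {W : Type*} [AddCommMonoid W] (φ : α → W) (D : Set α) : Prop :=
  ∃ S : Finset α, (S : Set α) = D ∧ S.Nonempty ∧ ∑ x ∈ S, φ x = 0

section BinaryRepresentation

variable {W : Type*} [AddCommGroup W] [Module (ZMod 2) W]

theorem not_linearIndepOn_iff_exists_isNonemptyZeroSum (φ : α → W) (D : Set α) :
    ¬ LinearIndepOn (ZMod 2) φ D ↔ ∃ S ⊆ D, IsNonemptyZeroSum φ S := by
  classical
  rw [linearIndepOn_iff']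
  push Not
  constructor
  · rintro ⟨t, g, htD, hsum, i, hit, hgi⟩
    -- over `GF(2)` a nonzero coefficient is `1`, so the combination is the sum over its support
    have hcoeff : ∀ j, g j • φ j = if g j ≠ 0 then φ j else 0 := fun j => by
      rcases (show ∀ c : ZMod 2, c = 0 ∨ c = 1 by decide) (g j) with h | h <;> simp [h]
    refine ⟨_, (Finset.coe_subset.2 (t.filter_subset (g · ≠ 0))).trans htD, _, rfl,
      ⟨i, Finset.mem_filter.2 ⟨hit, hgi⟩⟩, ?_⟩
    rw [Finset.sum_filter]
    exact (Finset.sum_congr rfl fun j _ => (hcoeff j).symm).trans hsum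
  · rintro ⟨_, hSD, t, rfl, ⟨i, hit⟩, hsum⟩
    exact ⟨t, 1, hSD, by simpa using hsum, i, hit, one_ne_zero⟩

theorem IsRep.dep_iff {M : Matroid α} {φ : α → W} (hM : IsRep M φ) (D : Set α) :
    M.Dep D ↔ D ⊆ M.E ∧ ∃ S ⊆ D, IsNonemptyZeroSum φ S := by
  rw [Matroid.dep_iff, hM, ← not_linearIndepOn_iff_exists_isNonemptyZeroSum]
  exact ⟨fun h => ⟨h.2, fun hli => h.1 ⟨h.2, hli⟩⟩, fun h => ⟨fun hi => h.2 hi.2, h.1⟩⟩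

theorem IsRep.mcircuit_iff {M : Matroid α} {φ : α → W} (hM : IsRep M φ) (C : Set α) :
    MCircuit M C ↔ C ⊆ M.E ∧ Minimal (IsNonemptyZeroSum φ) C :=
  minimal_iff_of_forall_iff_exists_subset hM.dep_iff

end BinaryRepresentation

section ElementSplitting

variable {W : Type*} [AddCommGroup W] [Module (ZMod 2) W] {φ : α → W} {T : Set α} {a : α}

theorem splitRep_self : splitRep φ T a a = (0, 1) := by
  simp [splitRep]

theorem sum_splitRep_of_notMem {S : Finset α} (ha : a ∉ S) :
    ∑ x ∈ S, splitRep φ T a x = (∑ x ∈ S, φ x, (((S : Set α) ∩ T).ncard : ZMod 2)) := by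
  classical
  have hsplit : ∀ x ∈ S, splitRep φ T a x = (φ x, if x ∈ T then 1 else 0) := fun x hx => by
    simp [splitRep, ne_of_mem_of_not_mem hx ha]
  have hcard : ((S : Set α) ∩ T).ncard = (S.filter (· ∈ T)).card := by
    rw [← Set.ncard_coe_finset, Finset.coe_filter]
    rfl
  rw [Finset.sum_congr rfl hsplit, Prod.ext_iff, Prod.fst_sum, Prod.snd_sum, Finset.sum_boole,
    hcard]
  exact ⟨rfl, rfl⟩

theorem IsNonemptyZeroSum.insert_splitRep {C : Set α} (hC : IsNonemptyZeroSum φ C)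
    (haC : a ∉ C) (hodd : Odd (C ∩ T).ncard) :
    IsNonemptyZeroSum (splitRep φ T a) (insert a C) := by
  classical
  obtain ⟨S, rfl, -, hS⟩ := hC
  refine ⟨insert a S, Finset.coe_insert a S, Finset.insert_nonempty a S, ?_⟩
  rw [Finset.sum_insert haC, sum_splitRep_of_notMem haC, splitRep_self, hS,
    hodd.natCast_zmod_two]
  exact Prod.ext (add_zero 0) (by decide : (1 : ZMod 2) + 1 = 0)

theorem Minimal.insert_splitRep {C : Set α} (hC : Minimal (IsNonemptyZeroSum φ) C)
    (haC : a ∉ C) (hodd : Odd (C ∩ T).ncard) :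
    Minimal (IsNonemptyZeroSum (splitRep φ T a)) (insert a C) := by
  classical
  refine ⟨hC.1.insert_splitRep haC hodd, ?_⟩
  rintro _ ⟨S, rfl, hSne, hS⟩ hSC
  by_cases haS : a ∈ S
  · have ha_erase := Finset.notMem_erase a S
    rw [← Finset.insert_erase haS, Finset.sum_insert ha_erase, sum_splitRep_of_notMem ha_erase,
      splitRep_self] at hS
    simp only [Prod.ext_iff, Prod.fst_add, Prod.snd_add, Prod.fst_zero, Prod.snd_zero,
      zero_add] at hS
    -- `S = {a}` would sum to `(0, 1)`
    have hne : (S.erase a).Nonempty := by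
      refine Finset.nonempty_iff_ne_empty.2 fun h => ?_
      simp [h] at hS
    have hS'C : (S.erase a : Set α) ⊆ C := fun x hx => by
      rw [Finset.coe_erase] at hx
      exact (hSC hx.1).resolve_left hx.2
    rw [← Finset.insert_erase haS, Finset.coe_insert]
    exact insert_subset_insert (hC.2 ⟨_, rfl, hne, hS.1⟩ hS'C)
  · exfalso
    rw [sum_splitRep_of_notMem haS, Prod.ext_iff] at hS
    have hSC' : (S : Set α) ⊆ C := fun x hx => (hSC hx).resolve_left (ne_of_mem_of_not_mem hx haS)
    have hCS := hSC'.antisymm (hC.2 ⟨S, rfl, hSne, hS.1⟩ hSC')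
    rw [hCS, hodd.natCast_zmod_two] at hS
    exact one_ne_zero hS.2

end ElementSplitting

theorem circuit_odd_inter_insert_is_circuit_eleSplit_general {α W : Type*}
    [AddCommGroup W] [Module (ZMod 2) W]
    (M N : Matroid α) (φ : α → W) (hM : IsRep M φ) (T : Set α)
    (a : α) (hN : IsEleSplit M φ T a N)
    (C : Set α) (hC : MCircuit M C) (hodd : Odd ((C ∩ T).ncard)) :
    MCircuit N (insert a C) := by
  obtain ⟨haE, hNE, hNrep⟩ := hN
  obtain ⟨hCE, hCmin⟩ := (hM.mcircuit_iff C).1 hC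
  rw [hNrep.mcircuit_iff, hNE]
  exact ⟨insert_subset_insert hCE, hCmin.insert_splitRep (fun haC => haE (hCE haC)) hodd⟩

/-- If C is a circuit of M containing an odd number of elements of T, then C ∪ {a} is a
circuit of the element splitting matroid M'_T. -/
theorem circuit_odd_inter_insert_is_circuit_eleSplit {α W : Type*}
    [AddCommGroup W] [Module (ZMod 2) W]
    (M N : Matroid α) (φ : α → W) (hM : IsRep M φ) (T : Set α) (hT : T ⊆ M.E)
    (a : α) (hN : IsEleSplit M φ T a N)
    (C : Set α) (hC : MCircuit M C) (hodd : Odd ((C ∩ T).ncard)) :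
    MCircuit N (insert a C) :=
  circuit_odd_inter_insert_is_circuit_eleSplit_general M N φ hM T a hN C hC hodd
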